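/- Let C be a convex cone in a real vector space with an ordering, and vol : C → ℝ≥0 positively homogeneous of degree d+1, continuous along lines, satisfying: for all nef P and nef N in C, vol(P − N) ≥ P^{d+1} − (d+1)·P^d·N whenever P − N ∈ C (Siu's inequality), where X ↦ X^{d+1} and (X,Y) ↦ X^d·Y are a symmetric multilinear intersection form restricted to nef elements with X^{d+1} = vol(X) for nef X. Then for nef A and nef E₁, E₂ with A, E₁, E₂ ≤ ω (ω nef), and E = E₁ − E₂: vol(A + tE) ≥ A^{d+1} + (d+1)·(A^d·E)·t − 2^{d+1}(d+1)²·ω^{d+1}·t² for all rational 0 ≤ t ≤ 1. -/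
import Mathlib

section Aux

variable {V : Type*} [AddCommGroup V] [Module ℝ V] {d : ℕ}
  (I : MultilinearMap ℝ (fun _ : Fin (d + 1) => V) ℝ)

/-- Binomial-type expansion of `I (A + τ•E₁, ..., A + τ•E₁)`. -/
lemma aux_expand1 (A E₁ : V) (τ : ℝ) :
    I (fun _ => A + τ • E₁) = ∑ s : Finset (Fin (d+1)),
      τ ^ s.card * I (s.piecewise (fun _ => E₁) (fun _ => A)) := by
  have h0 : (fun _ : Fin (d+1) => A + τ • E₁) = (fun _ : Fin (d+1) => τ • E₁) + (fun _ => A) := by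
    funext i; show A + τ • E₁ = τ • E₁ + A; rw [add_comm]
  rw [h0, MultilinearMap.map_add_univ]
  refine Finset.sum_congr rfl fun s _ => ?_
  have h2 : I (s.piecewise (fun _ : Fin (d+1) => τ • E₁) (fun _ => A)) =
      (∏ _i ∈ s, τ) • I (s.piecewise (fun _ : Fin (d+1) => E₁) (fun _ => A)) := by
    rw [← I.map_piecewise_smul (fun _ => τ) (s.piecewise (fun _ => E₁) (fun _ => A)) s]
    congr 1
    funext j
    by_cases hj : j ∈ s <;> simp [Finset.piecewise, hj]
  rw [h2, Finset.prod_const, smul_eq_mul]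

/-- Expansion of `I (A + τ•E₁, ..., A + τ•E₁, τ•E₂)`. -/
lemma aux_expand2 (A E₁ E₂ : V) (τ : ℝ) :
    I (Function.update (fun _ => A + τ • E₁) (Fin.last d) (τ • E₂)) =
      ∑ s : Finset (Fin (d+1)),
        (if Fin.last d ∈ s then 0 else
          τ ^ (s.card + 1) *
            I (Function.update (s.piecewise (fun _ => E₁) (fun _ => A)) (Fin.last d) E₂)) := by
  have h0 : Function.update (fun _ : Fin (d+1) => A + τ • E₁) (Fin.last d) (τ • E₂) =
      (Function.update (fun _ : Fin (d+1) => τ • E₁) (Fin.last d) 0) +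
      (Function.update (fun _ : Fin (d+1) => A) (Fin.last d) (τ • E₂)) := by
    funext j
    simp only [Pi.add_apply]
    by_cases hj : j = Fin.last d
    · subst hj; simp
    · rw [Function.update_of_ne hj, Function.update_of_ne hj, Function.update_of_ne hj,
        add_comm]
  rw [h0, MultilinearMap.map_add_univ]
  refine Finset.sum_congr rfl fun s _ => ?_
  by_cases hls : Fin.last d ∈ s
  · rw [if_pos hls]
    apply I.map_coord_zero (Fin.last d)
    simp [Finset.piecewise, hls]
  · rw [if_neg hls]
    have h2 : s.piecewise (Function.update (fun _ : Fin (d+1) => τ • E₁) (Fin.last d) 0)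
        (Function.update (fun _ : Fin (d+1) => A) (Fin.last d) (τ • E₂)) =
        (insert (Fin.last d) s).piecewise
          (fun i => τ • (Function.update (s.piecewise (fun _ : Fin (d+1) => E₁)
            (fun _ => A)) (Fin.last d) E₂) i)
          (Function.update (s.piecewise (fun _ : Fin (d+1) => E₁) (fun _ => A))
            (Fin.last d) E₂) := by
      funext j
      by_cases hj : j = Fin.last d
      · subst hj
        simp [Finset.piecewise, hls]
      · by_cases hjs : j ∈ s <;>
          simp [Finset.piecewise, hjs, hj, Function.update_of_ne hj]
    rw [h2, I.map_piecewise_smul, Finset.prod_const, Finset.card_insert_of_notMem hls,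
      smul_eq_mul]

end Aux

/-- Abstract Siu-type quadratic lower bound for volumes (Lemma 3.12 in dimension d+1). -/
theorem stmt_16 {V : Type*} [AddCommGroup V] [Module ℝ V] [PartialOrder V]
    (d : ℕ) (hd : 1 ≤ d) (Cone Nef : Set V) (vol : V → ℝ)
    (I : MultilinearMap ℝ (fun _ : Fin (d + 1) => V) ℝ)
    (hsym : ∀ (σ : Equiv.Perm (Fin (d + 1))) (v : Fin (d + 1) → V), I (v ∘ σ) = I v)
    (hvolnonneg : ∀ X : V, 0 ≤ vol X)
    (hvolhom : ∀ (c : ℝ), 0 ≤ c → ∀ X : V, vol (c • X) = c ^ (d + 1) * vol X)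
    (hvolnef : ∀ X ∈ Nef, vol X = I (fun _ => X))
    (hNefAdd : ∀ X ∈ Nef, ∀ Y ∈ Nef, X + Y ∈ Nef)
    (hNefSmul : ∀ (c : ℝ), 0 ≤ c → ∀ X ∈ Nef, c • X ∈ Nef)
    (hmonoI : ∀ (ω : V), ω ∈ Nef → ∀ v : Fin (d + 1) → V,
      (∀ i, v i ∈ Nef ∧ 0 ≤ v i ∧ v i ≤ ω) → 0 ≤ I v ∧ I v ≤ I (fun _ => ω))
    (hSiu : ∀ P ∈ Nef, ∀ N ∈ Nef, P - N ∈ Cone →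
      vol (P - N) ≥ I (fun _ => P) -
        (d + 1) * I (Function.update (fun _ => P) (Fin.last d) N))
    (A E₁ E₂ ω : V) (hA : A ∈ Nef) (hE₁ : E₁ ∈ Nef) (hE₂ : E₂ ∈ Nef) (hω : ω ∈ Nef)
    (hA0 : 0 ≤ A) (hE₁0 : 0 ≤ E₁) (hE₂0 : 0 ≤ E₂)
    (hAω : A ≤ ω) (hE₁ω : E₁ ≤ ω) (hE₂ω : E₂ ≤ ω) :
    ∀ t : ℚ, 0 ≤ t → t ≤ 1 → A + (t : ℝ) • (E₁ - E₂) ∈ Cone →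
      vol (A + (t : ℝ) • (E₁ - E₂)) ≥
        I (fun _ => A) +
          (d + 1) * (I (Function.update (fun _ => A) (Fin.last d) (E₁ - E₂))) * (t : ℝ) -
          2 ^ (d + 1) * ((d : ℝ) + 1) ^ 2 * I (fun _ => ω) * (t : ℝ) ^ 2 := by
  intro t ht0 ht1 hCone
  have hτ0 : (0:ℝ) ≤ (t : ℝ) := by exact_mod_cast ht0
  have hτ1 : (t : ℝ) ≤ 1 := by exact_mod_cast ht1
  have hω0 : (0 : V) ≤ ω := hA0.trans hAω
  -- bound for intersection numbers of vectors built from A, E₁, E₂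
  have hboundv : ∀ v : Fin (d+1) → V, (∀ i, v i = A ∨ v i = E₁ ∨ v i = E₂) →
      0 ≤ I v ∧ I v ≤ I (fun _ => ω) := by
    intro v hv
    refine hmonoI ω hω v fun i => ?_
    rcases hv i with h | h | h <;> rw [h]
    · exact ⟨hA, hA0, hAω⟩
    · exact ⟨hE₁, hE₁0, hE₁ω⟩
    · exact ⟨hE₂, hE₂0, hE₂ω⟩
  have hW0 : 0 ≤ I (fun _ : Fin (d+1) => ω) :=
    (hmonoI ω hω (fun _ => ω) fun i => ⟨hω, hω0, le_refl ω⟩).1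
  -- apply Siu
  have hP : A + (t:ℝ) • E₁ ∈ Nef := hNefAdd A hA _ (hNefSmul _ hτ0 E₁ hE₁)
  have hN : (t:ℝ) • E₂ ∈ Nef := hNefSmul _ hτ0 E₂ hE₂
  have heq : A + (t:ℝ) • (E₁ - E₂) = (A + (t:ℝ) • E₁) - (t:ℝ) • E₂ := by
    rw [smul_sub]; abel
  rw [heq] at hCone ⊢
  have key := hSiu _ hP _ hN hCone
  rw [aux_expand1 I A E₁ (t:ℝ), aux_expand2 I A E₁ E₂ (t:ℝ)] at key
  -- singleton terms via symmetry
  have hcsing : ∀ i : Fin (d+1),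
      I (({i} : Finset (Fin (d+1))).piecewise (fun _ => E₁) (fun _ => A)) =
      I (Function.update (fun _ => A) (Fin.last d) E₁) := by
    intro i
    have h1 : ({i} : Finset (Fin (d+1))).piecewise (fun _ => E₁) (fun _ => A) =
        (Function.update (fun _ : Fin (d+1) => A) (Fin.last d) E₁) ∘
          (Equiv.swap i (Fin.last d)) := by
      funext j
      by_cases hj : j = i
      · subst hj
        have hsw : Equiv.swap j (Fin.last d) j = Fin.last d := Equiv.swap_apply_left _ _
        simp only [Finset.piecewise, Function.comp, Finset.mem_singleton, if_pos rfl]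
        rw [hsw, Function.update_self]
        simp
      · have hne : Equiv.swap i (Fin.last d) j ≠ Fin.last d := by
          intro h
          exact hj ((Equiv.swap i (Fin.last d)).injective
            (h.trans (Equiv.swap_apply_left i (Fin.last d)).symm))
        simp [Finset.piecewise, hj, Function.comp, Function.update_of_ne hne]
    rw [h1, hsym]
  -- lower bound for the first sum
  have hS1 : (∑ s : Finset (Fin (d+1)),
        (t:ℝ) ^ s.card * I (s.piecewise (fun _ => E₁) (fun _ => A))) ≥
      I (fun _ => A) + ((d : ℝ) + 1) * (t:ℝ) *
        I (Function.update (fun _ => A) (Fin.last d) E₁) := by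
    have hnotmem : (∅ : Finset (Fin (d+1))) ∉
        (Finset.univ.image fun i : Fin (d+1) => ({i} : Finset (Fin (d+1)))) := by
      simp
    have hsum : ∑ s ∈ (insert ∅ (Finset.univ.image fun i : Fin (d+1) =>
          ({i} : Finset (Fin (d+1))))),
          (t:ℝ) ^ s.card * I (s.piecewise (fun _ => E₁) (fun _ => A))
        = I (fun _ => A) + ((d : ℝ) + 1) * (t:ℝ) *
          I (Function.update (fun _ => A) (Fin.last d) E₁) := by
      rw [Finset.sum_insert hnotmem, Finset.sum_image (by intro x _ y _ h; simpa using h)]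
      simp only [Finset.card_empty, pow_zero, one_mul, Finset.card_singleton, pow_one,
        hcsing, Finset.piecewise_empty]
      rw [Finset.sum_const, Finset.card_univ, Fintype.card_fin, nsmul_eq_mul]
      push_cast
      ring
    calc (∑ s : Finset (Fin (d+1)),
          (t:ℝ) ^ s.card * I (s.piecewise (fun _ => E₁) (fun _ => A)))
        ≥ ∑ s ∈ (insert ∅ (Finset.univ.image fun i : Fin (d+1) =>
            ({i} : Finset (Fin (d+1))))),
            (t:ℝ) ^ s.card * I (s.piecewise (fun _ => E₁) (fun _ => A)) := by
          refine Finset.sum_le_sum_of_subset_of_nonneg (Finset.subset_univ _) fun s _ _ => ?_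
          refine mul_nonneg (pow_nonneg hτ0 _) ?_
          refine (hboundv _ fun i => ?_).1
          by_cases hi : i ∈ s <;> simp [Finset.piecewise, hi]
      _ = _ := hsum
  -- upper bound for the second sum
  have hS2 : (∑ s : Finset (Fin (d+1)),
      (if Fin.last d ∈ s then (0:ℝ) else (t:ℝ) ^ (s.card + 1) *
        I (Function.update (s.piecewise (fun _ => E₁) (fun _ => A)) (Fin.last d) E₂))) ≤
      (t:ℝ) * I (Function.update (fun _ => A) (Fin.last d) E₂) +
        ((2:ℝ) ^ (d+1) - 1) * ((t:ℝ) ^ 2 * I (fun _ => ω)) := by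
    have hbbnd : ∀ s : Finset (Fin (d+1)),
        0 ≤ I (Function.update (s.piecewise (fun _ => E₁) (fun _ => A)) (Fin.last d) E₂) ∧
        I (Function.update (s.piecewise (fun _ => E₁) (fun _ => A)) (Fin.last d) E₂) ≤
          I (fun _ => ω) := by
      intro s
      refine hboundv _ fun i => ?_
      by_cases hil : i = Fin.last d
      · subst hil; simp
      · by_cases hi : i ∈ s <;> simp [Finset.piecewise, hi, Function.update_of_ne hil]
    have hterm : ∀ s : Finset (Fin (d+1)),
        (if Fin.last d ∈ s then (0:ℝ) else (t:ℝ) ^ (s.card + 1) *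
          I (Function.update (s.piecewise (fun _ => E₁) (fun _ => A)) (Fin.last d) E₂)) ≤
        (if s = ∅ then (t:ℝ) * I (Function.update (fun _ => A) (Fin.last d) E₂)
          else (t:ℝ) ^ 2 * I (fun _ => ω)) := by
      intro s
      by_cases hse : s = ∅
      · subst hse
        simp [Finset.piecewise_empty]
      · rw [if_neg hse]
        by_cases hls : Fin.last d ∈ s
        · rw [if_pos hls]
          exact mul_nonneg (sq_nonneg _) hW0
        · rw [if_neg hls]
          have hcard : 2 ≤ s.card + 1 := by
            have := Finset.card_pos.mpr (Finset.nonempty_of_ne_empty hse)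
            omega
          have h1 : (t:ℝ) ^ (s.card + 1) ≤ (t:ℝ) ^ 2 := pow_le_pow_of_le_one hτ0 hτ1 hcard
          have h2 := hbbnd s
          calc (t:ℝ) ^ (s.card + 1) *
                I (Function.update (s.piecewise (fun _ => E₁) (fun _ => A)) (Fin.last d) E₂)
              ≤ (t:ℝ) ^ 2 *
                I (Function.update (s.piecewise (fun _ => E₁) (fun _ => A)) (Fin.last d) E₂) :=
                mul_le_mul_of_nonneg_right h1 h2.1
            _ ≤ (t:ℝ) ^ 2 * I (fun _ => ω) := mul_le_mul_of_nonneg_left h2.2 (sq_nonneg _)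
    calc (∑ s : Finset (Fin (d+1)),
          (if Fin.last d ∈ s then (0:ℝ) else (t:ℝ) ^ (s.card + 1) *
            I (Function.update (s.piecewise (fun _ => E₁) (fun _ => A)) (Fin.last d) E₂)))
        ≤ ∑ s : Finset (Fin (d+1)),
            (if s = ∅ then (t:ℝ) * I (Function.update (fun _ => A) (Fin.last d) E₂)
              else (t:ℝ) ^ 2 * I (fun _ => ω)) := Finset.sum_le_sum fun s _ => hterm s
      _ = (t:ℝ) * I (Function.update (fun _ => A) (Fin.last d) E₂) +
          ((2:ℝ) ^ (d+1) - 1) * ((t:ℝ) ^ 2 * I (fun _ => ω)) := by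
          rw [← Finset.add_sum_erase Finset.univ _ (Finset.mem_univ (∅ : Finset (Fin (d+1))))]
          rw [if_pos rfl]
          congr 1
          rw [Finset.sum_congr rfl (fun s hs => if_neg (Finset.ne_of_mem_erase hs)),
            Finset.sum_const, Finset.card_erase_of_mem (Finset.mem_univ _),
            Finset.card_univ, Fintype.card_finset, Fintype.card_fin, nsmul_eq_mul,
            Nat.cast_sub Nat.one_le_two_pow]
          push_cast
          ring
  -- put everything together
  rw [MultilinearMap.map_update_sub]
  have hD0 : (0:ℝ) ≤ (d:ℝ) + 1 := by positivity
  have hD1 : (1:ℝ) ≤ (d:ℝ) + 1 := by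
    have : (0:ℝ) ≤ (d:ℝ) := Nat.cast_nonneg d
    linarith
  have hB1 : (1:ℝ) ≤ (2:ℝ) ^ (d+1) := one_le_pow₀ (by norm_num : (1:ℝ) ≤ 2)
  have hB0 : (0:ℝ) ≤ (2:ℝ) ^ (d+1) := by positivity
  have hq0 : (0:ℝ) ≤ (t:ℝ) ^ 2 * I (fun _ : Fin (d+1) => ω) := mul_nonneg (sq_nonneg _) hW0
  have hA1 : ((d:ℝ) + 1) * (∑ s : Finset (Fin (d+1)),
      (if Fin.last d ∈ s then (0:ℝ) else (t:ℝ) ^ (s.card + 1) *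
        I (Function.update (s.piecewise (fun _ => E₁) (fun _ => A)) (Fin.last d) E₂))) ≤
      ((d:ℝ) + 1) * ((t:ℝ) * I (Function.update (fun _ => A) (Fin.last d) E₂) +
        ((2:ℝ) ^ (d+1) - 1) * ((t:ℝ) ^ 2 * I (fun _ => ω))) :=
    mul_le_mul_of_nonneg_left hS2 hD0
  have hcoef : ((d:ℝ) + 1) * ((2:ℝ) ^ (d+1) - 1) ≤ (2:ℝ) ^ (d+1) * ((d:ℝ) + 1) ^ 2 := by
    nlinarith [mul_nonneg hD0 (mul_nonneg hB0 (sub_nonneg.mpr hD1))]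
  have hcoef2 : ((d:ℝ) + 1) * ((2:ℝ) ^ (d+1) - 1) * ((t:ℝ) ^ 2 * I (fun _ : Fin (d+1) => ω)) ≤
      (2:ℝ) ^ (d+1) * ((d:ℝ) + 1) ^ 2 * ((t:ℝ) ^ 2 * I (fun _ : Fin (d+1) => ω)) :=
    mul_le_mul_of_nonneg_right hcoef hq0
  linarith [key, hS1, hA1, hcoef2]
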